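/- arXiv:math/0102006 — 5 statements merged into one kernel-verified Lean document; each statement's English description precedes it below -/
import Mathlib

section
/- Let N ≥ 1 be an integer, let Γ₀(N) ⊂ SL(2,ℤ) be the subgroup of matrices whose lower-left entry is divisible by N, and let G be the subgroup of GL(2,ℤ) generated by Γ₀(N) and the matrix [[−1,0],[0,1]]. Let P = GL(2,ℤ)/G with the left multiplication action. Then for every t ∈ P, {g·t : g ∈ Red_3} = P, i.e. every coset is reached from t by a product of exactly three matrices of the form [[0,1],[1,k]] with k ≥ 1. -/
open MeasureTheory Filter Matrix

set_option synthInstance.maxHeartbeats 1000000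
set_option maxHeartbeats 1000000

noncomputable section

/-- The matrix `γ_k = [[0,1],[1,k]]` as an element of `GL(2,ℤ)`. -/
def gammaK (k : ℤ) : GL (Fin 2) ℤ :=
  ⟨!![0,1;1,k], !![-k,1;1,0],
   by ext i j; fin_cases i <;> fin_cases j <;>
      simp [Matrix.mul_apply, Fin.sum_univ_two, Matrix.one_apply],
   by ext i j; fin_cases i <;> fin_cases j <;>
      simp [Matrix.mul_apply, Fin.sum_univ_two, Matrix.one_apply]⟩

/-- `Red_n`: products of exactly `n` matrices `γ_k`, `k ≥ 1`. -/
def RedN (n : ℕ) : Set (GL (Fin 2) ℤ) :=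
  { g | ∃ k : Fin n → ℤ, (∀ i, 1 ≤ k i) ∧ g = (List.ofFn (fun i => gammaK (k i))).prod }

/-- The sign-change matrix `[[-1,0],[0,1]]` as an element of `GL(2,ℤ)`. -/
def signChange : GL (Fin 2) ℤ :=
  ⟨!![-1,0;0,1], !![-1,0;0,1],
   by ext i j; fin_cases i <;> fin_cases j <;>
      simp [Matrix.mul_apply, Fin.sum_univ_two, Matrix.one_apply],
   by ext i j; fin_cases i <;> fin_cases j <;>
      simp [Matrix.mul_apply, Fin.sum_univ_two, Matrix.one_apply]⟩

/-- The subgroup of `GL(2,ℤ)` generated by (the lift of) `Γ₀(N)` and the sign change. -/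
def liftedGamma0 (N : ℕ) : Subgroup (GL (Fin 2) ℤ) :=
  Subgroup.closure
    ((Matrix.SpecialLinearGroup.toGL ''
        ((CongruenceSubgroup.Gamma0 N : Subgroup (Matrix.SpecialLinearGroup (Fin 2) ℤ)) :
          Set (Matrix.SpecialLinearGroup (Fin 2) ℤ))) ∪ {signChange})


/-! A coset `gG` only depends on the first column of `g` modulo `N`, up to a unit: if the
first columns `(a, c)` and `(a', c')` of `g` and `g'` satisfy `a c' ≡ c a' (mod N)`, then
`gG = g'G`, since `g⁻¹ g'` then has lower-left entry divisible by `N` and determinant `±1`.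
The matrix `γ_k` acts on columns by `(x, y) ↦ (y, x + k y)`. Choose `k₃` so that `a + k₃ c` is
a unit modulo `N` and `k₁` so that `c' - k₁ a'` is; then matching `(a', c')` after three steps
is a single linear congruence in `k₂` with unit leading coefficient. All residues modulo `N`
have positive representatives, so the `kᵢ` can be taken `≥ 1`. -/

namespace ZMod

/-- `a` is a unit modulo `d = gcd(c, N)`; lift it to a unit `u` modulo `N` and solve
`k c ≡ u - a (mod N)`, which is possible because `d ∣ u - a`. -/
theorem exists_isUnit_add_mul (N : ℕ) [NeZero N] {a c : ℤ} (h : IsCoprime a c) :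
    ∃ k : ℤ, IsUnit ((a + k * c : ℤ) : ZMod N) := by
  set d := Int.gcd c N
  have hdN : d ∣ N := by exact_mod_cast Int.gcd_dvd_right c N
  have ha : IsUnit (a : ZMod d) := by
    have := (h.of_isCoprime_of_dvd_right (Int.gcd_dvd_left c N)).map (Int.castRingHom (ZMod d))
    rwa [map_natCast, natCast_self, isCoprime_zero_right] at this
  obtain ⟨U, hU⟩ := unitsMap_surjective hdN ha.unit
  obtain ⟨u, hu⟩ := intCast_surjective (U : ZMod N)
  obtain ⟨m, hm⟩ : (d : ℤ) ∣ u - a := by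
    rw [← intCast_eq_intCast_iff_dvd_sub, ← cast_intCast hdN u, hu]
    exact congrArg Units.val hU.symm
  refine ⟨Int.gcdA c N * m, ?_⟩
  have hd := Int.gcd_eq_gcd_ab c N
  have : a + Int.gcdA c N * m * c = u - N * (Int.gcdB c N * m) := by
    linear_combination -hm - m * hd
  rw [this, Int.cast_sub, Int.cast_mul, Int.cast_natCast, natCast_self, zero_mul, sub_zero, hu]
  exact U.isUnit

theorem exists_one_le_intCast_eq {N : ℕ} [NeZero N] (x : ZMod N) :
    ∃ k : ℤ, 1 ≤ k ∧ (k : ZMod N) = x :=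
  ⟨x.val + N, by have := NeZero.pos N; omega, by simp⟩

theorem exists_one_le_isUnit_add_mul (N : ℕ) [NeZero N] {a c : ℤ} (h : IsCoprime a c) :
    ∃ k : ℤ, 1 ≤ k ∧ IsUnit ((a : ZMod N) + k * c) := by
  obtain ⟨k, hk⟩ := exists_isUnit_add_mul N h
  obtain ⟨k', hk', hk'k⟩ := exists_one_le_intCast_eq (k : ZMod N)
  exact ⟨k', hk', by push_cast [hk'k] at hk ⊢; exact hk⟩

end ZMod

theorem Matrix.GeneralLinearGroup.isCoprime_col {R : Type*} [CommRing R] (g : GL (Fin 2) R)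
    (j : Fin 2) : IsCoprime (g.val 0 j) (g.val 1 j) := by
  have hdet : (↑(det g)⁻¹ : R) * (g.val 0 0 * g.val 1 1 - g.val 0 1 * g.val 1 0) = 1 := by
    rw [← Matrix.det_fin_two, ← val_det_apply, Units.inv_mul]
  refine match j with
  | 0 => ⟨↑(det g)⁻¹ * g.val 1 1, -(↑(det g)⁻¹ * g.val 0 1), ?_⟩
  | 1 => ⟨-(↑(det g)⁻¹ * g.val 1 0), ↑(det g)⁻¹ * g.val 0 0, ?_⟩ <;>
  · linear_combination hdet

/-- With `γ_k (x, y) = (y, x + k y)`, the middle step `k₂` sends `(c, w)` to `(w, z)` with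
`z = c + k₂ w`; it can be chosen so that `γ_{k₁} (w, z)` is proportional to `(a', c')`. -/
theorem exists_middle_step {R : Type*} [CommRing R] {w a' c' k₁ : R} (hw : IsUnit w)
    (hζ : IsUnit (c' - k₁ * a')) (c : R) :
    ∃ k₂ : R, a' * (w + k₁ * (c + k₂ * w)) = c' * (c + k₂ * w) := by
  refine ⟨(a' * w * ↑hζ.unit⁻¹ - c) * ↑hw.unit⁻¹, ?_⟩
  linear_combination -(a' * w) * hζ.mul_val_inv
    - (c' - k₁ * a') * (a' * w * ↑hζ.unit⁻¹ - c) * hw.mul_val_inv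

theorem gammaK_mul_val_zero (k : ℤ) (g : GL (Fin 2) ℤ) (j : Fin 2) :
    (gammaK k * g).val 0 j = g.val 1 j := by
  simp [gammaK, Matrix.mul_apply, Fin.sum_univ_two]

theorem gammaK_mul_val_one (k : ℤ) (g : GL (Fin 2) ℤ) (j : Fin 2) :
    (gammaK k * g).val 1 j = g.val 0 j + k * g.val 1 j := by
  simp [gammaK, Matrix.mul_apply, Fin.sum_univ_two]

theorem gammaK_mul_gammaK_mul_gammaK_mem_redN {k₁ k₂ k₃ : ℤ} (h₁ : 1 ≤ k₁) (h₂ : 1 ≤ k₂)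
    (h₃ : 1 ≤ k₃) : gammaK k₁ * gammaK k₂ * gammaK k₃ ∈ RedN 3 :=
  ⟨![k₁, k₂, k₃], fun i => by fin_cases i <;> assumption, by simp [List.ofFn_succ, mul_assoc]⟩

theorem mem_liftedGamma0_of_dvd {N : ℕ} {g : GL (Fin 2) ℤ} (h : (N : ℤ) ∣ g.val 1 0) :
    g ∈ liftedGamma0 N := by
  have of_det_eq_one : ∀ g : GL (Fin 2) ℤ, g.val.det = 1 → (N : ℤ) ∣ g.val 1 0 →
      g ∈ liftedGamma0 N := fun g hdet h =>
    Subgroup.subset_closure <| Or.inl ⟨⟨g.val, hdet⟩,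
      CongruenceSubgroup.Gamma0_mem.mpr ((ZMod.intCast_zmod_eq_zero_iff_dvd _ _).mpr h),
      Units.ext rfl⟩
  rcases Int.units_eq_one_or (Matrix.GeneralLinearGroup.det g) with hdet | hdet
  · exact of_det_eq_one g (by rw [← Matrix.GeneralLinearGroup.val_det_apply, hdet]; rfl) h
  · have hdet' : g.val.det = -1 := by rw [← Matrix.GeneralLinearGroup.val_det_apply, hdet]; rfl
    have hs : signChange ∈ liftedGamma0 N := Subgroup.subset_closure (Or.inr rfl)
    refine (Subgroup.mul_mem_cancel_right _ hs).mp (of_det_eq_one _ ?_ ?_)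
    · simp [signChange, Matrix.det_mul, hdet']
    · simpa [signChange, Matrix.mul_apply, Fin.sum_univ_two] using h

theorem mk_eq_mk_liftedGamma0_of_dvd {N : ℕ} {v w : GL (Fin 2) ℤ}
    (h : (N : ℤ) ∣ v.val 0 0 * w.val 1 0 - v.val 1 0 * w.val 0 0) :
    (w : GL (Fin 2) ℤ ⧸ liftedGamma0 N) = v := by
  rw [eq_comm, QuotientGroup.eq]
  apply mem_liftedGamma0_of_dvd
  have hw : w = v * (v⁻¹ * w) := by group
  have : v.val 0 0 * w.val 1 0 - v.val 1 0 * w.val 0 0 = v.val.det * (v⁻¹ * w).val 1 0 := by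
    conv_lhs => rw [hw]
    simp only [Units.val_mul, Matrix.mul_apply, Fin.sum_univ_two, Matrix.det_fin_two]
    ring
  rwa [this, IsUnit.dvd_mul_left ((Matrix.isUnit_iff_isUnit_det _).mp v.isUnit)] at h

/-- **Proposition 1.2.1**: for `G` generated by the lift of `Γ₀(N)` and the sign change,
`Red_3(t) = P` for every `t ∈ P = GL(2,ℤ)/G`. -/
theorem red_three_transitive (N : ℕ) (hN : 1 ≤ N)
    (t : GL (Fin 2) ℤ ⧸ liftedGamma0 N) :
    {s : GL (Fin 2) ℤ ⧸ liftedGamma0 N | ∃ g ∈ RedN 3, g • t = s} = Set.univ := by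
  have : NeZero N := ⟨by omega⟩
  refine Set.eq_univ_of_forall fun s => ?_
  induction t using QuotientGroup.induction_on with | H u => ?_
  induction s using QuotientGroup.induction_on with | H v => ?_
  obtain ⟨k₃, hk₃, hw⟩ := ZMod.exists_one_le_isUnit_add_mul N (u.isCoprime_col 0)
  obtain ⟨k₁, hk₁, hζ⟩ := ZMod.exists_one_le_isUnit_add_mul N (v.isCoprime_col 0).symm.neg_right
  rw [Int.cast_neg, mul_neg, ← sub_eq_add_neg] at hζ
  obtain ⟨κ₂, hκ₂⟩ := exists_middle_step hw hζ (u.val 1 0 : ZMod N)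
  obtain ⟨k₂, hk₂, rfl⟩ := ZMod.exists_one_le_intCast_eq κ₂
  refine ⟨_, gammaK_mul_gammaK_mul_gammaK_mem_redN hk₁ hk₂ hk₃, mk_eq_mk_liftedGamma0_of_dvd ?_⟩
  rw [← ZMod.intCast_zmod_eq_zero_iff_dvd]
  simp only [smul_eq_mul, mul_assoc, gammaK_mul_val_zero, gammaK_mul_val_one]
  push_cast
  linear_combination hκ₂
end
end

section
/- Let P be a finite left GL(2,ℤ)-set and let B_ℂ be the complex Banach space of functions f : D̄ × P → ℂ that are continuous on each sheet D̄ × {t} and holomorphic on D × {t}, equipped with the supremum norm. For every complex s with Re s > 1/2, the transfer operator L_s defines a bounded linear operator on B_ℂ which is compact. -/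
open MeasureTheory Filter Matrix
open scoped Classical

set_option synthInstance.maxHeartbeats 1000000
set_option maxHeartbeats 1000000

noncomputable section

/-- The disc `D = {z : |z - 1| < 3/2}`. -/
def DD : Set ℂ := Metric.ball (1:ℂ) (3/2)

instance : CompactSpace (closure DD) :=
  isCompact_iff_compactSpace.mp
    (Metric.isCompact_of_isClosed_isBounded isClosed_closure Metric.isBounded_ball.closure)

/-- Evaluation of a continuous function on `D̄` at a point of `ℂ`, extended by `0`. -/
def apC (g : C(↥(closure DD), ℂ)) (z : ℂ) : ℂ :=
  if h : z ∈ closure DD then g ⟨z, h⟩ else 0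

/-- The Banach space `B_ℂ = V_ℂ(D̄ × P)` of functions continuous on each sheet
`D̄ × {t}` and holomorphic on `D × {t}`, with the supremum norm. -/
def holoSubmodule (P : Type*) [Fintype P] : Submodule ℂ (P → C(↥(closure DD), ℂ)) where
  carrier := {f | ∀ t : P, DifferentiableOn ℂ (fun z => apC (f t) z) DD}
  add_mem' := by
    intro f g hf hg t
    exact ((hf t).add (hg t)).congr (fun z hz => by
      simp only [apC, dif_pos (subset_closure hz), Pi.add_apply, ContinuousMap.add_apply])
  zero_mem' := by
    intro t
    exact (differentiableOn_const 0).congr (fun z hz => by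
      simp only [apC, dif_pos (subset_closure hz), Pi.zero_apply, ContinuousMap.zero_apply])
  smul_mem' := by
    intro c f hf t
    exact ((hf t).const_smul c).congr (fun z hz => by
      simp only [apC, dif_pos (subset_closure hz), Pi.smul_apply, ContinuousMap.smul_apply,
        smul_eq_mul])

namespace TransferAux

lemma DD_open : IsOpen DD := Metric.isOpen_ball

lemma closure_DD_eq : closure DD = Metric.closedBall (1:ℂ) (3/2) := by
  rw [DD]; exact closure_ball _ (by norm_num)

def KK : Set ℂ := Metric.closedBall (1:ℂ) (299/200)

lemma KK_subset_DD : KK ⊆ DD := Metric.closedBall_subset_ball (by norm_num)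

lemma KK_subset_closure : KK ⊆ closure DD := fun z hz => subset_closure (KK_subset_DD hz)

instance : CompactSpace ↥KK :=
  isCompact_iff_compactSpace.mp (isCompact_closedBall _ _)

lemma re_lower {z : ℂ} (hz : z ∈ closure DD) (k : ℕ) :
    ((k:ℝ)+1)/2 ≤ (z + ((k:ℂ)+1)).re := by
  rw [closure_DD_eq, Metric.mem_closedBall, Complex.dist_eq] at hz
  have h1 : |(z-1).re| ≤ 3/2 := (Complex.abs_re_le_norm _).trans hz
  have h2 : (z-1).re = z.re - 1 := by simp
  rw [h2] at h1
  have h3 : -(3/2) ≤ z.re - 1 := neg_le_of_abs_le h1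
  have h4 : (z + ((k:ℂ)+1)).re = z.re + ((k:ℝ)+1) := by simp
  have hk : (0:ℝ) ≤ k := Nat.cast_nonneg k
  rw [h4]; linarith

lemma re_pos {z : ℂ} (hz : z ∈ closure DD) (k : ℕ) : 0 < (z + ((k:ℂ)+1)).re :=
  lt_of_lt_of_le (by positivity) (re_lower hz k)

lemma abs_lower {z : ℂ} (hz : z ∈ closure DD) (k : ℕ) :
    ((k:ℝ)+1)/2 ≤ ‖z + ((k:ℂ)+1)‖ :=
  (re_lower hz k).trans (Complex.re_le_norm _)

lemma ne_zero' {z : ℂ} (hz : z ∈ closure DD) (k : ℕ) : z + ((k:ℂ)+1) ≠ 0 := by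
  intro h
  have := re_pos hz k
  rw [h] at this
  simp at this

lemma inv_mem_KK {z : ℂ} (hz : z ∈ closure DD) (k : ℕ) :
    1/(z + ((k:ℂ)+1)) ∈ KK := by
  set c := z + ((k:ℂ)+1) with hc
  have hc0 : c ≠ 0 := ne_zero' hz k
  have hre : ((k:ℝ)+1)/2 ≤ c.re := re_lower hz k
  have h12 : (1/2:ℝ) ≤ c.re := by
    have hk : (0:ℝ) ≤ k := Nat.cast_nonneg k
    linarith
  have habs : (0:ℝ) < ‖c‖ := norm_pos_iff.mpr hc0
  rw [KK, Metric.mem_closedBall, Complex.dist_eq]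
  have heq : 1/c - 1 = (1 - c)/c := by field_simp
  rw [heq, norm_div, div_le_iff₀ habs]
  have hsq : (‖1-c‖)^2 ≤ (299/200 * ‖c‖)^2 := by
    rw [mul_pow, Complex.sq_norm, Complex.sq_norm, Complex.normSq_apply, Complex.normSq_apply]
    have h1re : (1-c).re = 1 - c.re := by simp
    have h1im : (1-c).im = -c.im := by simp
    rw [h1re, h1im]
    nlinarith [sq_nonneg c.im, sq_nonneg c.re, sq_nonneg (c.re - 1/2)]
  have := (pow_le_pow_iff_left₀ (norm_nonneg _)
    (by positivity) (two_ne_zero)).mp hsq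
  exact this


lemma apC_eq (g : C(↥(closure DD), ℂ)) {z : ℂ} (h : z ∈ closure DD) :
    apC g z = g ⟨z, h⟩ := dif_pos h

lemma norm_apC_le (g : C(↥(closure DD), ℂ)) (z : ℂ) : ‖apC g z‖ ≤ ‖g‖ := by
  unfold apC
  split
  · exact g.norm_coe_le_norm _
  · simp

def uBound (s : ℂ) (k : ℕ) : ℝ :=
  Real.exp (Real.pi * |s.im|) * ((2:ℝ) ^ (2*s.re) * ((k:ℝ)+1) ^ (-(2*s.re)))

lemma uBound_nonneg (s : ℂ) (k : ℕ) : 0 ≤ uBound s k := by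
  unfold uBound; positivity

lemma summable_uBound {s : ℂ} (hs : 1/2 < s.re) : Summable (uBound s) := by
  have h0 : Summable (fun n : ℕ => (n:ℝ) ^ (-(2*s.re))) :=
    Real.summable_nat_rpow.mpr (by linarith)
  have h2 : Summable (fun n : ℕ => (((n+1:ℕ)):ℝ) ^ (-(2*s.re))) :=
    (summable_nat_add_iff 1).mpr h0
  have h1 : Summable (fun k : ℕ => ((k:ℝ)+1) ^ (-(2*s.re))) := by
    refine h2.congr fun n => ?_
    push_cast
    rfl
  exact (h1.mul_left (Real.exp (Real.pi * |s.im|) * (2:ℝ) ^ (2*s.re))).congr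
    (fun k => by unfold uBound; ring)

lemma norm_cpow_le {z : ℂ} (hz : z ∈ closure DD) {s : ℂ} (hs : 1/2 < s.re) (k : ℕ) :
    ‖(z + ((k:ℂ)+1)) ^ (-(2*s))‖ ≤ uBound s k := by
  set c := z + ((k:ℂ)+1) with hc
  have hc0 : c ≠ 0 := ne_zero' hz k
  have habs : ((k:ℝ)+1)/2 ≤ ‖c‖ := abs_lower hz k
  have hpos : (0:ℝ) < ((k:ℝ)+1)/2 := by positivity
  rw [Complex.norm_cpow_of_ne_zero hc0]
  have he_re : (-(2*s)).re = -(2*s.re) := by simp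
  have he_im : (-(2*s)).im = -(2*s.im) := by simp
  rw [he_re, he_im]
  have h1 : ‖c‖ ^ (-(2*s.re)) ≤ (2:ℝ) ^ (2*s.re) * ((k:ℝ)+1) ^ (-(2*s.re)) := by
    have hmono := Real.rpow_le_rpow_of_nonpos hpos habs
      (by linarith : -(2*s.re) ≤ 0)
    calc ‖c‖ ^ (-(2*s.re)) ≤ (((k:ℝ)+1)/2) ^ (-(2*s.re)) := hmono
      _ = ((k:ℝ)+1) ^ (-(2*s.re)) / (2:ℝ) ^ (-(2*s.re)) :=
          Real.div_rpow (by positivity) (by norm_num) _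
      _ = (2:ℝ) ^ (2*s.re) * ((k:ℝ)+1) ^ (-(2*s.re)) := by
          rw [Real.rpow_neg (by norm_num : (0:ℝ) ≤ 2), div_eq_mul_inv, inv_inv, mul_comm]
  have harg : |Complex.arg c| ≤ Real.pi/2 :=
    Complex.abs_arg_le_pi_div_two_iff.mpr (re_pos hz k).le
  have hexp : (Real.exp (Complex.arg c * -(2*s.im)))⁻¹ ≤ Real.exp (Real.pi * |s.im|) := by
    rw [← Real.exp_neg]
    apply Real.exp_le_exp.mpr
    have h2 : -(Complex.arg c * -(2*s.im)) ≤ |Complex.arg c * -(2*s.im)| := neg_le_abs _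
    refine h2.trans ?_
    rw [abs_mul, abs_neg, abs_mul]
    have h3 : |(2:ℝ)| = 2 := by norm_num
    rw [h3]
    nlinarith [abs_nonneg s.im,
      mul_le_mul_of_nonneg_right harg (by positivity : (0:ℝ) ≤ 2*|s.im|)]
  rw [div_eq_mul_inv]
  unfold uBound
  rw [mul_comm (Real.exp _)]
  exact mul_le_mul h1 hexp (by positivity) (by positivity)

def psiK (k : ℕ) : C(↥(closure DD), ↥KK) where
  toFun z := ⟨1/((z:ℂ) + ((k:ℂ)+1)), inv_mem_KK z.2 k⟩
  continuous_toFun := by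
    apply Continuous.subtype_mk
    exact Continuous.div continuous_const
      (continuous_subtype_val.add continuous_const) (fun z => ne_zero' z.2 k)

def inclKK : C(↥KK, ↥(closure DD)) :=
  ⟨fun w => ⟨(w:ℂ), KK_subset_closure w.2⟩, continuous_subtype_val.subtype_mk _⟩

def cpowPart (s : ℂ) (k : ℕ) : C(↥(closure DD), ℂ) where
  toFun z := ((z:ℂ) + ((k:ℂ)+1)) ^ (-(2*s))
  continuous_toFun := by
    rw [continuous_iff_continuousAt]
    intro z
    refine ContinuousAt.cpow ((continuous_subtype_val.add continuous_const).continuousAt)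
      continuousAt_const ?_
    exact Complex.mem_slitPlane_iff.mpr (Or.inl (re_pos z.2 k))

lemma norm_cpowPart_le {s : ℂ} (hs : 1/2 < s.re) (k : ℕ) :
    ‖cpowPart s k‖ ≤ uBound s k :=
  (ContinuousMap.norm_le _ (uBound_nonneg s k)).mpr (fun z => norm_cpow_le z.2 hs k)


variable {P : Type*} [Fintype P] [MulAction (GL (Fin 2) ℤ) P]

def Sterm (s : ℂ) (g : P → C(↥KK, ℂ)) (t : P) (k : ℕ) : C(↥(closure DD), ℂ) :=
  cpowPart s k * ((g (gammaK ((k:ℤ)+1) • t)).comp (psiK k))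

lemma norm_comp_le (h : C(↥KK, ℂ)) : ‖h.comp (psiK k)‖ ≤ ‖h‖ :=
  (ContinuousMap.norm_le _ (norm_nonneg h)).mpr fun z => h.norm_coe_le_norm _

lemma norm_Sterm_le {s : ℂ} (hs : 1/2 < s.re) (g : P → C(↥KK, ℂ)) (t : P) (k : ℕ) :
    ‖Sterm s g t k‖ ≤ uBound s k * ‖g‖ := by
  refine (norm_mul_le _ _).trans ?_
  exact mul_le_mul (norm_cpowPart_le hs k)
    ((norm_comp_le _).trans (norm_le_pi_norm g _)) (norm_nonneg _) (uBound_nonneg s k)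

lemma summable_norm_Sterm {s : ℂ} (hs : 1/2 < s.re) (g : P → C(↥KK, ℂ)) (t : P) :
    Summable (fun k => ‖Sterm s g t k‖) :=
  Summable.of_nonneg_of_le (fun _ => norm_nonneg _) (norm_Sterm_le hs g t)
    ((summable_uBound hs).mul_right ‖g‖)

lemma summable_Sterm {s : ℂ} (hs : 1/2 < s.re) (g : P → C(↥KK, ℂ)) (t : P) :
    Summable (fun k => Sterm s g t k) :=
  (summable_norm_Sterm hs g t).of_norm

variable (P) in
def SLlin (s : ℂ) (hs : 1/2 < s.re) :
    (P → C(↥KK, ℂ)) →ₗ[ℂ] (P → C(↥(closure DD), ℂ)) where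
  toFun g := fun t => ∑' k, Sterm s g t k
  map_add' g g' := by
    funext t
    rw [Pi.add_apply, ← Summable.tsum_add (summable_Sterm hs g t) (summable_Sterm hs g' t)]
    refine tsum_congr fun k => ?_
    ext z
    simp [Sterm, mul_add]
  map_smul' c g := by
    funext t
    rw [RingHom.id_apply, Pi.smul_apply, ← Summable.tsum_const_smul c (summable_Sterm hs g t)]
    refine tsum_congr fun k => ?_
    ext z
    simp [Sterm]
    try ring

lemma SL_bound {s : ℂ} (hs : 1/2 < s.re) (g : P → C(↥KK, ℂ)) :
    ‖SLlin P s hs g‖ ≤ (∑' k, uBound s k) * ‖g‖ := by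
  rw [pi_norm_le_iff_of_nonneg
    (mul_nonneg (tsum_nonneg (uBound_nonneg s)) (norm_nonneg g))]
  intro t
  calc ‖∑' k, Sterm s g t k‖ ≤ ∑' k, ‖Sterm s g t k‖ :=
        norm_tsum_le_tsum_norm (summable_norm_Sterm hs g t)
    _ ≤ ∑' k, uBound s k * ‖g‖ :=
        Summable.tsum_le_tsum (norm_Sterm_le hs g t) (summable_norm_Sterm hs g t)
          ((summable_uBound hs).mul_right ‖g‖)
    _ = (∑' k, uBound s k) * ‖g‖ := tsum_mul_right

variable (P) in
def SL (s : ℂ) (hs : 1/2 < s.re) :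
    (P → C(↥KK, ℂ)) →L[ℂ] (P → C(↥(closure DD), ℂ)) :=
  LinearMap.mkContinuous (SLlin P s hs) (∑' k, uBound s k) (SL_bound hs)

variable (P) in
def RLlin : (P → C(↥(closure DD), ℂ)) →ₗ[ℂ] (P → C(↥KK, ℂ)) where
  toFun f := fun t => (f t).comp inclKK
  map_add' f g := by funext t; ext w; simp
  map_smul' c f := by funext t; ext w; simp

variable (P) in
def RL : (P → C(↥(closure DD), ℂ)) →L[ℂ] (P → C(↥KK, ℂ)) :=
  LinearMap.mkContinuous (RLlin P) 1 (fun f => by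
    rw [one_mul, pi_norm_le_iff_of_nonneg (norm_nonneg f)]
    intro t
    exact (ContinuousMap.norm_le _ (norm_nonneg f)).mpr
      (fun w => ((f t).norm_coe_le_norm _).trans (norm_le_pi_norm f t)))

variable (P) in
def Lfull (s : ℂ) (hs : 1/2 < s.re) :
    (P → C(↥(closure DD), ℂ)) →L[ℂ] (P → C(↥(closure DD), ℂ)) :=
  (SL P s hs).comp (RL P)

lemma Lfull_apply {s : ℂ} (hs : 1/2 < s.re) (f : P → C(↥(closure DD), ℂ))
    (t : P) (z : ↥(closure DD)) :
    (Lfull P s hs f) t z = ∑' k : ℕ, ((z:ℂ) + ((k:ℂ)+1)) ^ (-(2*s)) *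
      apC (f (gammaK ((k:ℤ)+1) • t)) (1/((z:ℂ)+((k:ℂ)+1))) := by
  have hsum := summable_Sterm hs (RL P f) t
  have heval := (ContinuousMap.evalCLM (R := ℂ) z).map_tsum hsum
  calc (Lfull P s hs f) t z = ∑' k, (Sterm s (RL P f) t k) z := by
        exact heval
    _ = _ := by
        refine tsum_congr fun k => ?_
        have hm : (1/((z:ℂ)+((k:ℂ)+1))) ∈ closure DD := KK_subset_closure (inv_mem_KK z.2 k)
        rw [apC_eq _ hm]
        rfl


variable {P : Type*} [Fintype P] [MulAction (GL (Fin 2) ℤ) P]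

lemma Lfull_mem {s : ℂ} (hs : 1/2 < s.re) {f : P → C(↥(closure DD), ℂ)}
    (hf : f ∈ holoSubmodule P) : Lfull P s hs f ∈ holoSubmodule P := by
  intro t
  set Fk : ℕ → ℂ → ℂ := fun k z => (z + ((k:ℂ)+1)) ^ (-(2*s)) *
    apC (f (gammaK ((k:ℤ)+1) • t)) (1/(z+((k:ℂ)+1))) with hFk
  have hdiff : ∀ k, DifferentiableOn ℂ (Fk k) DD := by
    intro k z hz
    have hz' : z ∈ closure DD := subset_closure hz
    apply DifferentiableAt.differentiableWithinAt
    have h1 : DifferentiableAt ℂ (fun z : ℂ => (z + ((k:ℂ)+1)) ^ (-(2*s))) z := by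
      refine DifferentiableAt.cpow (differentiableAt_id.add_const _)
        (differentiableAt_const _) ?_
      exact Complex.mem_slitPlane_iff.mpr (Or.inl (by simpa using re_pos hz' k))
    have hne : z + ((k:ℂ)+1) ≠ 0 := ne_zero' hz' k
    have h2 : DifferentiableAt ℂ (fun z : ℂ => 1/(z + ((k:ℂ)+1))) z := by
      simp only [one_div]
      exact (differentiableAt_id.add_const _).inv hne
    have hmem : 1/(z + ((k:ℂ)+1)) ∈ DD := KK_subset_DD (inv_mem_KK hz' k)
    have h3 : DifferentiableAt ℂ (fun w => apC (f (gammaK ((k:ℤ)+1) • t)) w)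
        (1/(z + ((k:ℂ)+1))) :=
      (hf _).differentiableAt (DD_open.mem_nhds hmem)
    exact h1.mul (by have := h3.comp z h2; exact this)
  have hbound : ∀ (k : ℕ) (w : ℂ), w ∈ DD → ‖Fk k w‖ ≤ uBound s k * ‖f‖ := by
    intro k w hw
    have hw' : w ∈ closure DD := subset_closure hw
    refine (norm_mul_le _ _).trans ?_
    exact mul_le_mul (norm_cpow_le hw' hs k)
      ((norm_apC_le _ _).trans (norm_le_pi_norm f _)) (norm_nonneg _) (uBound_nonneg s k)
  have h := Complex.differentiableOn_tsum_of_summable_norm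
    ((summable_uBound hs).mul_right ‖f‖) hdiff DD_open hbound
  refine h.congr ?_
  intro z hz
  have hz' : z ∈ closure DD := subset_closure hz
  show apC ((Lfull P s hs f) t) z = _
  rw [apC_eq _ hz', Lfull_apply hs f t ⟨z, hz'⟩]

omit [MulAction (GL (Fin 2) ℤ) P] in
lemma holo_closed :
    IsClosed ((holoSubmodule P : Submodule ℂ (P → C(↥(closure DD), ℂ))) :
      Set (P → C(↥(closure DD), ℂ))) := by
  apply IsSeqClosed.isClosed
  intro u p hu hup t
  have htend : TendstoUniformlyOn (fun n z => apC (u n t) z) (fun z => apC (p t) z)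
      atTop DD := by
    rw [Metric.tendstoUniformlyOn_iff]
    intro ε hε
    have h1 : ∀ᶠ n in atTop, dist (u n) p < ε := by
      have := Metric.tendsto_nhds.mp hup ε hε
      exact this
    filter_upwards [h1] with n hn z hz
    have hz' : z ∈ closure DD := subset_closure hz
    rw [apC_eq _ hz', apC_eq _ hz']
    calc dist ((p t) ⟨z, hz'⟩) ((u n t) ⟨z, hz'⟩) ≤ dist (p t) (u n t) :=
          ContinuousMap.dist_apply_le_dist _
      _ ≤ dist p (u n) := dist_le_pi_dist p (u n) t
      _ = dist (u n) p := dist_comm _ _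
      _ < ε := hn
  exact (htend.tendstoLocallyUniformlyOn).differentiableOn
    (Filter.Eventually.of_forall fun n => hu n t) DD_open


def AA : Set C(↥KK, ℂ) := {h | (∀ w, ‖h w‖ ≤ 1) ∧ LipschitzWith 400 h}

lemma AA_compact : IsCompact AA := by
  set S0 : Set (↥KK → ℂ) := {φ | (∀ w, ‖φ w‖ ≤ 1) ∧
    ∀ w w', dist (φ w) (φ w') ≤ 400 * dist w w'} with hS0
  have himg : ContinuousMap.toFun '' AA = S0 := by
    ext φ
    constructor
    · rintro ⟨h, ⟨hb, hl⟩, rfl⟩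
      refine ⟨hb, fun w w' => ?_⟩
      have := hl.dist_le_mul w w'
      simpa using this
    · rintro ⟨hb, hl⟩
      have hlip : LipschitzWith 400 φ :=
        LipschitzWith.of_dist_le_mul (fun x y => by simpa using hl x y)
      exact ⟨⟨φ, hlip.continuous⟩, ⟨hb, hlip⟩, rfl⟩
  have hclosed : IsClosed S0 := by
    have h1 : IsClosed (⋂ w : ↥KK, {φ : ↥KK → ℂ | ‖φ w‖ ≤ 1}) :=
      isClosed_iInter fun w =>
        isClosed_le ((continuous_apply w).norm) continuous_const
    have h2 : IsClosed (⋂ w : ↥KK, ⋂ w' : ↥KK,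
        {φ : ↥KK → ℂ | dist (φ w) (φ w') ≤ 400 * dist w w'}) :=
      isClosed_iInter fun w => isClosed_iInter fun w' =>
        isClosed_le ((continuous_apply w).dist (continuous_apply w')) continuous_const
    have heq : S0 = (⋂ w : ↥KK, {φ : ↥KK → ℂ | ‖φ w‖ ≤ 1}) ∩
        (⋂ w : ↥KK, ⋂ w' : ↥KK,
          {φ : ↥KK → ℂ | dist (φ w) (φ w') ≤ 400 * dist w w'}) := by
      ext φ
      simp only [hS0, Set.mem_setOf_eq, Set.mem_inter_iff, Set.mem_iInter]
    rw [heq]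
    exact h1.inter h2
  have hsub : S0 ⊆ Set.univ.pi (fun _ : ↥KK => Metric.closedBall (0:ℂ) 1) := by
    intro φ hφ
    rw [Set.mem_univ_pi]
    intro w
    rw [Metric.mem_closedBall, dist_zero_right]
    exact hφ.1 w
  have hS0c : IsCompact S0 :=
    IsCompact.of_isClosed_subset
      (isCompact_univ_pi fun _ => isCompact_closedBall _ _) hclosed hsub
  apply ArzelaAscoli.isCompact_of_equicontinuous
  · rw [himg]; exact hS0c
  · intro x
    rw [Metric.equicontinuousAt_iff]
    intro ε hε
    refine ⟨ε/400, by positivity, fun y hy i => ?_⟩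
    have hxy : dist (i.1 x) (i.1 y) ≤ 400 * dist x y := by
      simpa using i.2.2.dist_le_mul x y
    have hyx : dist x y < ε/400 := by simpa [dist_comm] using hy
    calc dist (i.1 x) (i.1 y) ≤ 400 * dist x y := hxy
      _ < 400 * (ε/400) := by
          exact mul_lt_mul_of_pos_left hyx (by norm_num : (0:ℝ) < 400)
      _ = ε := by ring

variable {P : Type*} [Fintype P] [MulAction (GL (Fin 2) ℤ) P]

omit [MulAction (GL (Fin 2) ℤ) P] in
lemma mem_AA {f : P → C(↥(closure DD), ℂ)} (hf : f ∈ holoSubmodule P)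
    (hn : ‖f‖ ≤ 1) (t : P) : (f t).comp inclKK ∈ AA := by
  set g : ℂ → ℂ := fun z => apC (f t) z with hg
  have hgb : ∀ z, ‖g z‖ ≤ 1 := fun z =>
    (norm_apC_le _ _).trans ((norm_le_pi_norm f t).trans hn)
  have hgd : DifferentiableOn ℂ g DD := hf t
  have happ : ∀ w : ↥KK, ((f t).comp inclKK) w = g (w : ℂ) := by
    intro w
    show (f t) (inclKK w) = apC (f t) (w : ℂ)
    rw [apC_eq _ (KK_subset_closure w.2)]
    rfl
  have hderiv : ∀ w ∈ KK, ‖deriv g w‖ ≤ 400 := by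
    intro w hw
    have hball : Metric.closedBall w (1/400) ⊆ DD := by
      intro x hx
      rw [Metric.mem_closedBall] at hx
      rw [KK, Metric.mem_closedBall] at hw
      rw [DD, Metric.mem_ball]
      calc dist x 1 ≤ dist x w + dist w 1 := dist_triangle _ _ _
        _ ≤ 1/400 + 299/200 := add_le_add hx hw
        _ < 3/2 := by norm_num
    have he := Complex.cderiv_eq_deriv DD_open hgd (by norm_num : (0:ℝ) < 1/400) hball
    rw [← he]
    have hb := Complex.norm_cderiv_le (z := w) (by norm_num : (0:ℝ) < 1/400)
      (fun x _ => hgb x)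
    calc ‖Complex.cderiv (1/400) g w‖ ≤ 1/(1/400) := hb
      _ = 400 := by norm_num
  have hlip : LipschitzOnWith 400 g KK := by
    refine Convex.lipschitzOnWith_of_nnnorm_deriv_le
      (fun x hx => hgd.differentiableAt (DD_open.mem_nhds (KK_subset_DD hx)))
      (fun x hx => ?_) (convex_closedBall _ _)
    have := hderiv x hx
    rw [← NNReal.coe_le_coe]
    push_cast
    simpa using this
  constructor
  · intro w
    rw [happ w]
    exact hgb _
  · rw [lipschitzWith_iff_dist_le_mul]
    intro x y
    rw [happ x, happ y]
    have := hlip.dist_le_mul (x : ℂ) x.2 (y : ℂ) y.2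
    rw [Subtype.dist_eq]
    exact this

end TransferAux

/-- **Lemma 1.1.2**: for `Re s > 1/2` the transfer operator `L_s` defines a bounded
linear operator on `B_ℂ` which is compact. -/
theorem transfer_operator_compact
    (P : Type*) [Fintype P] [MulAction (GL (Fin 2) ℤ) P]
    (s : ℂ) (hs : 1/2 < s.re) :
    ∃ T : ↥(holoSubmodule P) →L[ℂ] ↥(holoSubmodule P),
      IsCompactOperator T ∧
      ∀ (f : ↥(holoSubmodule P)) (z : ↥(closure DD)) (t : P),
        ((T f : P → C(↥(closure DD), ℂ)) t z) =
          ∑' k : ℕ, ((z:ℂ) + ((k:ℂ)+1)) ^ (-(2*s)) *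
            apC ((f : P → C(↥(closure DD), ℂ)) (gammaK ((k:ℤ)+1) • t))
              (1/((z:ℂ)+((k:ℂ)+1))) := by
  refine ⟨((TransferAux.Lfull P s hs).comp (holoSubmodule P).subtypeL).codRestrict
    (holoSubmodule P) (fun f => TransferAux.Lfull_mem hs f.2), ?_, ?_⟩
  · have hR : IsCompactOperator
        ⇑((TransferAux.RL P).comp (holoSubmodule P).subtypeL) := by
      refine ⟨Set.univ.pi (fun _ : P => TransferAux.AA),
        isCompact_univ_pi (fun _ => TransferAux.AA_compact), ?_⟩
      refine Filter.mem_of_superset (Metric.closedBall_mem_nhds 0 one_pos) ?_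
      intro f hfm
      rw [Set.mem_preimage, Set.mem_univ_pi]
      intro t
      have hn : ‖(f : P → C(↥(closure DD), ℂ))‖ ≤ 1 := by
        have := mem_closedBall_zero_iff.mp hfm
        exact this
      exact TransferAux.mem_AA f.2 hn t
    have hC : IsCompactOperator
        (⇑(TransferAux.SL P s hs) ∘ ⇑((TransferAux.RL P).comp (holoSubmodule P).subtypeL)) :=
      hR.continuous_comp (TransferAux.SL P s hs).continuous
    have hC2 : IsCompactOperator
        ⇑((TransferAux.Lfull P s hs).comp (holoSubmodule P).subtypeL) := hC
    exact hC2.codRestrict (fun f => TransferAux.Lfull_mem hs f.2) TransferAux.holo_closed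
  · intro f z t
    exact TransferAux.Lfull_apply hs (f : P → C(↥(closure DD), ℂ)) t z

end
end

section
/- (Gauss–Kuzmin recursion.) Let G be a finite-index subgroup of GL(2,ℤ), P = GL(2,ℤ)/G, t₀ ∈ P the coset of the identity, and for x ∈ [0,1], t ∈ P, n ≥ 0 let m_n(x,t) be the Lebesgue measure of {α ∈ (0,1) irrational : x_n(α) ≤ x and g_n(α)⁻¹·t₀ = t}. Then for every n ≥ 0, x ∈ [0,1] and t ∈ P, m_{n+1}(x,t) = Σ_{k=1}^{∞} [ m_n(1/k, γ_k·t) − m_n(1/(x+k), γ_k·t) ], where γ_k := [[0,1],[1,k]]. -/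
open MeasureTheory Filter Matrix

set_option synthInstance.maxHeartbeats 1000000
set_option maxHeartbeats 1000000

noncomputable section

/-- The Gauss map `x ↦ 1/x - ⌊1/x⌋`. -/
def gaussMap (x : ℝ) : ℝ := 1/x - ⌊(1/x : ℝ)⌋

/-- The continued fraction digit `k_n(α)` for `n ≥ 1`. -/
def cfK (α : ℝ) (n : ℕ) : ℤ := ⌊(1 / (gaussMap^[n-1] α) : ℝ)⌋

/-- `g_n(α) = [[p_{n-1}(α), p_n(α)],[q_{n-1}(α), q_n(α)]] = γ_{k_1(α)} ⋯ γ_{k_n(α)}`. -/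
def cfG (α : ℝ) (n : ℕ) : GL (Fin 2) ℤ :=
  ((List.range n).map (fun i => gammaK (cfK α (i+1)))).prod

/-- The measure `m_n(x,t)` of `{α ∈ (0,1) irrational : x_n(α) ≤ x, g_n(α)⁻¹ • t₀ = t}`,
where `t₀` is the coset of the identity in `P = GL(2,ℤ)/G`. -/
def mGK (G : Subgroup (GL (Fin 2) ℤ)) (x : ℝ) (t : GL (Fin 2) ℤ ⧸ G) (n : ℕ) : ℝ :=
  (volume {α : ℝ | α ∈ Set.Ioo (0:ℝ) 1 ∧ Irrational α ∧ gaussMap^[n] α ≤ x ∧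
       (cfG α n)⁻¹ • ((1 : GL (Fin 2) ℤ) : GL (Fin 2) ℤ ⧸ G) = t}).toReal

/-!
Split according to the `(n+1)`-st digit `k + 1`. Since `g_{n+1} = g_n γ_{k+1}` and
`x_{n+1} = 1/x_n - (k+1)`, the conditions `x_{n+1} ≤ x`, `k_{n+1} = k + 1`, `g_{n+1}⁻¹ t₀ = t`
say exactly that `g_n⁻¹ t₀ = γ_{k+1} t` and `x_n ∈ [1/(x+k+1), 1/(k+1)]` (irrationality of `x_n`
rules out the boundary cases). Every level set of `x_n` is countable, hence null, so the measure of
this piece is `m_n(1/(k+1), γ_{k+1} t) - m_n(1/(x+k+1), γ_{k+1} t)`, and countable additivity sums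
the pieces.
-/

open Set Function

lemma gaussMap_eq_fract (x : ℝ) : gaussMap x = Int.fract x⁻¹ := by
  rw [gaussMap, one_div]; rfl

lemma measurable_gaussMap : Measurable gaussMap := by
  rw [funext gaussMap_eq_fract]
  exact measurable_fract.comp measurable_inv

lemma gaussMap_mem_Ioo {α : ℝ} (h : Irrational α) : gaussMap α ∈ Ioo 0 1 := by
  rw [gaussMap_eq_fract]
  exact ⟨Int.fract_pos.mpr (h.inv.ne_int _), Int.fract_lt_one _⟩

lemma irrational_gaussMap {α : ℝ} (h : Irrational α) : Irrational (gaussMap α) := by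
  rw [gaussMap_eq_fract, Int.fract]
  exact h.inv.sub_intCast _

lemma irrational_iterate_gaussMap {α : ℝ} (h : Irrational α) (n : ℕ) :
    Irrational (gaussMap^[n] α) := by
  induction n with
  | zero => exact h
  | succ n ih => rw [iterate_succ_apply']; exact irrational_gaussMap ih

lemma preimage_gaussMap_singleton_subset (c : ℝ) :
    gaussMap ⁻¹' {c} ⊆ range fun k : ℤ => (c + k)⁻¹ := by
  intro α hα
  refine ⟨⌊α⁻¹⌋, ?_⟩
  rw [mem_preimage, mem_singleton_iff, gaussMap_eq_fract] at hα
  show (c + ⌊α⁻¹⌋)⁻¹ = α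
  rw [← hα, Int.fract_add_floor, inv_inv]

lemma countable_preimage_iterate {X : Type*} {f : X → X} (hf : ∀ c, (f ⁻¹' {c}).Countable)
    {s : Set X} (hs : s.Countable) (n : ℕ) : (f^[n] ⁻¹' s).Countable := by
  induction n generalizing s with
  | zero => exact hs
  | succ n ih =>
    rw [iterate_succ', preimage_comp]
    apply ih
    rw [← biUnion_preimage_singleton]
    exact hs.biUnion fun c _ => hf c

lemma volume_preimage_iterate_gaussMap_singleton (n : ℕ) (c : ℝ) :
    volume (gaussMap^[n] ⁻¹' {c}) = 0 :=
  (countable_preimage_iterate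
    (fun c => (countable_range _).mono (preimage_gaussMap_singleton_subset c))
    (countable_singleton c) n).measure_zero _

lemma measurable_cfK (m : ℕ) : Measurable fun α => cfK α m := by
  simp only [cfK, one_div]
  exact (measurable_inv.comp (measurable_gaussMap.iterate (m - 1))).floor

lemma cfG_eq_prod_ofFn (α : ℝ) (n : ℕ) :
    cfG α n = (List.ofFn fun i : Fin n => gammaK (cfK α (i + 1))).prod := by
  rw [cfG, List.ofFn_eq_map, ← List.map_coe_finRange_eq_range, List.map_map]; rfl

lemma cfG_succ (α : ℝ) (n : ℕ) : cfG α (n + 1) = cfG α n * gammaK (cfK α (n + 1)) := by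
  rw [cfG, List.range_succ, List.map_append, List.prod_append, List.map_singleton,
    List.prod_singleton]; rfl

lemma measurableSet_setOf_cfG (n : ℕ) (P : GL (Fin 2) ℤ → Prop) :
    MeasurableSet {α | P (cfG α n)} := by
  have hdigits : Measurable fun α (i : Fin n) => cfK α (i + 1) :=
    measurable_pi_lambda _ fun i => measurable_cfK _
  simp only [cfG_eq_prod_ofFn]
  exact hdigits
    (to_countable {d : Fin n → ℤ | P (List.ofFn fun i => gammaK (d i)).prod}).measurableSet

lemma iterate_gaussMap_mem_Ioo {α : ℝ} (hα : α ∈ Ioo 0 1) (hirr : Irrational α) (n : ℕ) :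
    gaussMap^[n] α ∈ Ioo 0 1 := by
  cases n with
  | zero => exact hα
  | succ n =>
    rw [iterate_succ_apply']
    exact gaussMap_mem_Ioo (irrational_iterate_gaussMap hirr n)

lemma cfK_succ (α : ℝ) (n : ℕ) : cfK α (n + 1) = ⌊(gaussMap^[n] α)⁻¹⌋ := by
  rw [cfK, Nat.add_sub_cancel, one_div]

lemma one_le_cfK_succ {α : ℝ} (hα : α ∈ Ioo 0 1) (hirr : Irrational α) (n : ℕ) :
    1 ≤ cfK α (n + 1) := by
  obtain ⟨hpos, hlt⟩ := iterate_gaussMap_mem_Ioo hα hirr n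
  rw [cfK_succ, Int.le_floor, Int.cast_one]
  exact (one_le_inv₀ hpos).mpr hlt.le

lemma floor_eq_and_fract_le_iff {u x : ℝ} (hu : Irrational u) (hx : x ≤ 1) (m : ℤ) :
    ⌊u⌋ = m ∧ Int.fract u ≤ x ↔ u ∈ Icc (m : ℝ) (m + x) := by
  constructor
  · rintro ⟨rfl, hle⟩
    exact ⟨Int.floor_le u, by linarith [Int.floor_add_fract u]⟩
  · rintro ⟨hmu, hux⟩
    have hne : u ≠ m + 1 := by exact_mod_cast hu.ne_int (m + 1)
    have hfloor : ⌊u⌋ = m := Int.floor_eq_iff.mpr ⟨hmu, (hux.trans (by linarith)).lt_of_ne hne⟩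
    refine ⟨hfloor, ?_⟩
    rw [Int.fract, hfloor]
    linarith

lemma gaussMap_le_and_floor_inv_eq_iff {y x : ℝ} (hy : 0 < y) (hirr : Irrational y)
    (hx0 : 0 ≤ x) (hx1 : x ≤ 1) (k : ℕ) :
    gaussMap y ≤ x ∧ ⌊y⁻¹⌋ = (k : ℤ) + 1 ↔
      y ∈ Icc (1 / (x + (k : ℝ) + 1)) (1 / ((k : ℝ) + 1)) := by
  rw [and_comm, gaussMap_eq_fract, floor_eq_and_fract_le_iff hirr.inv hx1, mem_Icc, mem_Icc,
    one_div, one_div, inv_le_comm₀ (by positivity) hy, le_inv_comm₀ hy (by positivity)]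
  push_cast
  constructor <;> rintro ⟨h1, h2⟩ <;> constructor <;> linarith

lemma iUnion_inter_setOf_cfK_succ {s : Set ℝ} (hs : s ⊆ Ioo 0 1 ∩ {α | Irrational α}) (n : ℕ) :
    ⋃ k : ℕ, s ∩ {α | cfK α (n + 1) = (k : ℤ) + 1} = s := by
  refine (iUnion_subset fun _ => inter_subset_left).antisymm fun α hα => ?_
  have hk := one_le_cfK_succ (hs hα).1 (hs hα).2 n
  exact mem_iUnion.mpr ⟨(cfK α (n + 1) - 1).toNat, hα, by simp only [mem_ofPred_eq]; omega⟩

lemma pairwise_disjoint_inter_setOf_cfK (s : Set ℝ) (n : ℕ) :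
    Pairwise (Disjoint on fun k : ℕ => s ∩ {α | cfK α n = (k : ℤ) + 1}) := by
  intro i j hij
  refine disjoint_left.mpr fun α hi hj => hij ?_
  have := hi.2.symm.trans hj.2
  omega

def cfCosetSet (G : Subgroup (GL (Fin 2) ℤ)) (t : GL (Fin 2) ℤ ⧸ G) (n : ℕ) : Set ℝ :=
  {α | α ∈ Ioo 0 1 ∧ Irrational α ∧ (cfG α n)⁻¹ • ((1 : GL (Fin 2) ℤ) : GL (Fin 2) ℤ ⧸ G) = t}

section cfCosetSet

variable {G : Subgroup (GL (Fin 2) ℤ)}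

lemma measurableSet_cfCosetSet (t : GL (Fin 2) ℤ ⧸ G) (n : ℕ) :
    MeasurableSet (cfCosetSet G t n) :=
  measurableSet_Ioo.inter (IsGδ.setOfPred_irrational.measurableSet.inter
    (measurableSet_setOf_cfG n fun g => g⁻¹ • ((1 : GL (Fin 2) ℤ) : GL (Fin 2) ℤ ⧸ G) = t))

lemma volume_cfCosetSet_ne_top (t : GL (Fin 2) ℤ ⧸ G) (n : ℕ) :
    volume (cfCosetSet G t n) ≠ ⊤ :=
  ((measure_mono fun _ h => h.1).trans_lt measure_Ioo_lt_top).ne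

lemma mGK_eq (x : ℝ) (t : GL (Fin 2) ℤ ⧸ G) (n : ℕ) :
    mGK G x t n = (volume (cfCosetSet G t n ∩ gaussMap^[n] ⁻¹' Iic x)).toReal := by
  rw [mGK]
  congr 2
  ext α
  simp only [cfCosetSet, mem_inter_iff, mem_ofPred_eq, mem_preimage, mem_Iic]
  tauto

lemma mem_cfCosetSet_succ_iff {α : ℝ} {n : ℕ} {m : ℤ} (hm : cfK α (n + 1) = m)
    (t : GL (Fin 2) ℤ ⧸ G) :
    α ∈ cfCosetSet G t (n + 1) ↔ α ∈ cfCosetSet G (gammaK m • t) n := by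
  simp only [cfCosetSet, mem_ofPred_eq, cfG_succ, hm, _root_.mul_inv_rev, mul_smul,
    inv_smul_eq_iff]

lemma cfCosetSet_succ_inter_setOf_cfK_eq {x : ℝ} (hx0 : 0 ≤ x) (hx1 : x ≤ 1)
    (t : GL (Fin 2) ℤ ⧸ G) (n k : ℕ) :
    cfCosetSet G t (n + 1) ∩ gaussMap^[n + 1] ⁻¹' Iic x ∩ {α | cfK α (n + 1) = (k : ℤ) + 1} =
      cfCosetSet G (gammaK ((k : ℤ) + 1) • t) n ∩
        gaussMap^[n] ⁻¹' Icc (1 / (x + (k : ℝ) + 1)) (1 / ((k : ℝ) + 1)) := by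
  ext α
  have hdigit (hα : α ∈ Ioo 0 1) (hirr : Irrational α) := gaussMap_le_and_floor_inv_eq_iff
    (iterate_gaussMap_mem_Ioo hα hirr n).1 (irrational_iterate_gaussMap hirr n) hx0 hx1 k
  simp only [mem_inter_iff, mem_preimage, mem_Iic, mem_ofPred_eq, iterate_succ_apply']
  constructor
  · rintro ⟨⟨hmem, hle⟩, hk⟩
    refine ⟨(mem_cfCosetSet_succ_iff hk t).mp hmem, (hdigit hmem.1 hmem.2.1).mp ⟨hle, ?_⟩⟩
    rwa [← cfK_succ]
  · rintro ⟨hmem, hIcc⟩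
    obtain ⟨hle, hk⟩ := (hdigit hmem.1 hmem.2.1).mpr hIcc
    rw [← cfK_succ] at hk
    exact ⟨⟨(mem_cfCosetSet_succ_iff hk t).mpr hmem, hle⟩, hk⟩

end cfCosetSet

lemma measure_inter_preimage_Icc {X Y : Type*} [MeasurableSpace X] [LinearOrder Y]
    {μ : Measure X} {s : Set X} {f : X → Y} {a b : Y} (hs : MeasurableSet s)
    (hfa : MeasurableSet (f ⁻¹' Iic a)) (hμs : μ s ≠ ⊤) (hab : a ≤ b) (ha : μ (f ⁻¹' {a}) = 0) :
    μ (s ∩ f ⁻¹' Icc a b) = μ (s ∩ f ⁻¹' Iic b) - μ (s ∩ f ⁻¹' Iic a) := by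
  have hIcc : (s ∩ f ⁻¹' Icc a b : Set X) =ᵐ[μ] (s ∩ f ⁻¹' Ioc a b : Set X) := by
    rw [← Ioc_insert_left hab, insert_eq, preimage_union]
    exact ae_eq_set_inter (ae_eq_refl s) (union_ae_eq_right_of_ae_eq_empty (ae_eq_empty.mpr ha))
  rw [measure_congr hIcc, ← Iic_sdiff_Iic, preimage_sdiff, inter_sdiff_distrib_left]
  exact measure_sdiff (inter_subset_inter_right s (preimage_mono (Iic_subset_Iic.mpr hab)))
    (hs.inter hfa).nullMeasurableSet
    (ne_top_of_le_ne_top hμs (measure_mono inter_subset_left))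

theorem gauss_kuzmin_recursion_general (G : Subgroup (GL (Fin 2) ℤ))
    (n : ℕ) (x : ℝ) (hx : x ∈ Set.Icc (0:ℝ) 1) (t : GL (Fin 2) ℤ ⧸ G) :
    mGK G x t (n+1) =
      ∑' k : ℕ, (mGK G (1/((k:ℝ)+1)) ((gammaK ((k:ℤ)+1)) • t) n
        - mGK G (1/(x+(k:ℝ)+1)) ((gammaK ((k:ℤ)+1)) • t) n) := by
  obtain ⟨hx0, hx1⟩ := hx
  rw [mGK_eq]
  set A := cfCosetSet G t (n + 1) ∩ gaussMap^[n + 1] ⁻¹' Iic x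
  have hA : A ⊆ Ioo 0 1 ∩ {α | Irrational α} := fun _ h => ⟨h.1.1, h.1.2.1⟩
  have hA_meas : MeasurableSet A :=
    (measurableSet_cfCosetSet t _).inter (measurable_gaussMap.iterate _ measurableSet_Iic)
  rw [← iUnion_inter_setOf_cfK_succ hA n,
    measure_iUnion (pairwise_disjoint_inter_setOf_cfK A _)
      fun k => hA_meas.inter (measurable_cfK _ (measurableSet_singleton _)),
    ENNReal.tsum_toReal_eq fun k => ne_top_of_le_ne_top (volume_cfCosetSet_ne_top t _)
      (measure_mono (inter_subset_left.trans inter_subset_left))]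
  refine tsum_congr fun k => ?_
  have hle : 1 / (x + (k : ℝ) + 1) ≤ 1 / ((k : ℝ) + 1) :=
    one_div_le_one_div_of_le (by positivity) (by linarith)
  rw [cfCosetSet_succ_inter_setOf_cfK_eq hx0 hx1,
    measure_inter_preimage_Icc (measurableSet_cfCosetSet _ n)
      (measurable_gaussMap.iterate n measurableSet_Iic) (volume_cfCosetSet_ne_top _ n) hle
      (volume_preimage_iterate_gaussMap_singleton n _),
    ENNReal.toReal_sub_of_le
      (measure_mono (inter_subset_inter_right _ (preimage_mono (Iic_subset_Iic.mpr hle))))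
      (ne_top_of_le_ne_top (volume_cfCosetSet_ne_top _ n) (measure_mono inter_subset_left)),
    mGK_eq, mGK_eq]

/-- **Gauss–Kuzmin recursion** (formula (0.8)):
`m_{n+1}(x,t) = Σ_{k≥1} [ m_n(1/k, γ_k·t) − m_n(1/(x+k), γ_k·t) ]`. -/
theorem gauss_kuzmin_recursion (G : Subgroup (GL (Fin 2) ℤ)) [G.FiniteIndex]
    (n : ℕ) (x : ℝ) (hx : x ∈ Set.Icc (0:ℝ) 1) (t : GL (Fin 2) ℤ ⧸ G) :
    mGK G x t (n+1) =
      ∑' k : ℕ, (mGK G (1/((k:ℝ)+1)) ((gammaK ((k:ℤ)+1)) • t) n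
        - mGK G (1/(x+(k:ℝ)+1)) ((gammaK ((k:ℤ)+1)) • t) n) :=
  gauss_kuzmin_recursion_general G n x hx t

end
end

section
/- Let N be a prime number and t > 0 a real number. Then Σ_{d=1}^{∞} φ(Nd)/(Nd)^{2+t} = ζ(1+t)/ζ(2+t) − ζ^{(N)}(1+t)/ζ^{(N)}(2+t), where φ is Euler's totient function, ζ is the Riemann zeta function, and ζ^{(N)}(s) := ζ(s)(1 − N^{−s}); the series on the left converges absolutely. -/
/-!
Since `∑_{d ∣ n} φ(d) = n`, i.e. `φ ⍟ 1 = id`, twisting by a Dirichlet character `χ` gives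
`L(χφ, s) = L(χ, s - 1) / L(χ, s)`. For the trivial character mod `1` this is
`ζ(s - 1) / ζ(s)`, and for the trivial character mod `N` it is `ζ^{(N)}(s - 1) / ζ^{(N)}(s)`.
The trivial character mod `N` is the indicator of `N ∤ n`, so the difference of the two
L-series is the sum over the multiples of `N`.
-/

noncomputable section

/-- `ζ^{(N)}(s) = ζ(s)(1 − N^{−s})`: the Riemann zeta function with the Euler factor
at `N` omitted. -/
def zetaOmit (N : ℕ) (s : ℂ) : ℂ := riemannZeta s * (1 - (N:ℂ)^(-s))

open LSeries Complex
open scoped LSeries.notation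

namespace LSeries

lemma term_mul_natCast (f : ℕ → ℂ) (s : ℂ) (n : ℕ) :
    term (fun m ↦ f m * m) s n = term f (s - 1) n := by
  rcases eq_or_ne n 0 with rfl | hn
  · simp only [term_zero]
  · rw [term_of_ne_zero hn, term_of_ne_zero hn, cpow_sub _ _ (Nat.cast_ne_zero.mpr hn), cpow_one,
      div_div_eq_mul_div]

lemma LSeries_mul_natCast (f : ℕ → ℂ) (s : ℂ) : L (fun m ↦ f m * m) s = L f (s - 1) :=
  tsum_congr (term_mul_natCast f s)

end LSeries

lemma totient_convolution_one {R : Type*} [Semiring R] :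
    (fun n ↦ (n.totient : R)) ⍟ 1 = fun n : ℕ ↦ (n : R) := by
  ext n
  simp only [LSeries.convolution_def, Pi.one_apply, mul_one]
  rw [Nat.sum_divisorsAntidiagonal (fun d _ ↦ (d.totient : R)), ← Nat.cast_sum, Nat.sum_totient]

lemma LSeriesSummable_totient {s : ℂ} (hs : 2 < s.re) :
    LSeriesSummable (fun n ↦ (n.totient : ℂ)) s :=
  LSeriesSummable_of_le_const_mul_rpow hs ⟨1, fun n _ ↦ by norm_num [Nat.totient_le]⟩

namespace DirichletCharacter

variable {N : ℕ}

lemma LSeries_mul_totient (χ : DirichletCharacter ℂ N) {s : ℂ} (hs : 2 < s.re) :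
    L (↗χ * fun n ↦ (n.totient : ℂ)) s = L ↗χ (s - 1) / L ↗χ s := by
  have hs₁ : 1 < s.re := by linarith
  rw [eq_div_iff (LSeries_ne_zero_of_one_lt_re χ hs₁),
    ← LSeries_convolution' (LSeriesSummable_mul χ (LSeriesSummable_totient hs))
      (LSeriesSummable_of_one_lt_re χ hs₁)]
  have hconv : (↗χ * fun n ↦ (n.totient : ℂ)) ⍟ ↗χ = ↗χ * fun n : ℕ ↦ (n : ℂ) := by
    rw [← totient_convolution_one, ← mul_convolution_distrib, mul_one]
  rw [hconv]
  exact LSeries_mul_natCast _ s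

lemma one_apply_natCast_of_prime (hN : N.Prime) (n : ℕ) :
    (1 : DirichletCharacter ℂ N) n = if N ∣ n then 0 else 1 := by
  have : Fact N.Prime := ⟨hN⟩
  split_ifs with hdvd
  · rw [(ZMod.natCast_eq_zero_iff n N).mpr hdvd]
    exact MulChar.map_nonunit _ not_isUnit_zero
  · exact MulChar.one_apply <| (ZMod.isUnit_iff_coprime n N).mpr <|
      ((Nat.Prime.coprime_iff_not_dvd hN).mpr hdvd).symm

lemma LSeries_one_eq_zetaOmit (hN : N.Prime) {s : ℂ} (hs : 1 < s.re) :
    L ↗(1 : DirichletCharacter ℂ N) s = zetaOmit N s := by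
  have : NeZero N := ⟨hN.ne_zero⟩
  rw [← changeLevel_one (one_dvd N), LSeries_changeLevel (one_dvd N) 1 hs, hN.primeFactors,
    Finset.prod_singleton, LSeries_modOne_eq, LSeries_one_eq_riemannZeta hs,
    MulChar.one_apply (isUnit_of_subsingleton _), one_mul, zetaOmit]

lemma LSeries_sub_LSeries_one_mul (hN : N.Prime) {f : ℕ → ℂ} {s : ℂ} (hf : LSeriesSummable f s) :
    L f s - L (↗(1 : DirichletCharacter ℂ N) * f) s = ∑' d, term f s (N * (d + 1)) := by
  have hterm (n : ℕ) : term f s n - term (↗(1 : DirichletCharacter ℂ N) * f) s n =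
      if N ∣ n then term f s n else 0 := by
    rcases eq_or_ne n 0 with rfl | hn
    · simp
    · simp only [term_of_ne_zero hn, Pi.mul_apply, one_apply_natCast_of_prime hN]
      split_ifs <;> simp
  have hmul : Function.Injective fun d ↦ N * (d + 1) :=
    (mul_right_injective₀ hN.ne_zero).comp (add_left_injective 1)
  calc L f s - L (↗(1 : DirichletCharacter ℂ N) * f) s
      = ∑' n, if N ∣ n then term f s n else 0 := by
        rw [LSeries, LSeries, ← hf.tsum_sub (LSeriesSummable_mul 1 hf)]
        exact tsum_congr hterm
    _ = ∑' d, if N ∣ N * (d + 1) then term f s (N * (d + 1)) else 0 := by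
        refine (hmul.tsum_eq fun n hn ↦ ?_).symm
        obtain ⟨hdvd, hne⟩ : N ∣ n ∧ term f s n ≠ 0 := by simpa using hn
        obtain ⟨m, rfl⟩ := hdvd
        have hm : m ≠ 0 := by rintro rfl; simp at hne
        exact ⟨m - 1, congrArg (N * ·) (by omega)⟩
    _ = ∑' d, term f s (N * (d + 1)) := by simp

end DirichletCharacter

lemma LSeries_totient {s : ℂ} (hs : 2 < s.re) :
    L (fun n ↦ (n.totient : ℂ)) s = riemannZeta (s - 1) / riemannZeta s := by
  have h := DirichletCharacter.LSeries_mul_totient (1 : DirichletCharacter ℂ 1) hs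
  rwa [DirichletCharacter.modOne_eq_one, one_mul,
    LSeries_one_eq_riemannZeta (by simp; linarith), LSeries_one_eq_riemannZeta (by linarith)] at h

open DirichletCharacter in
/-- For `N` prime and `t > 0`,
`Σ_{d ≥ 1} φ(Nd)/(Nd)^{2+t} = ζ(1+t)/ζ(2+t) − ζ^{(N)}(1+t)/ζ^{(N)}(2+t)`,
the series converging absolutely. -/
theorem totient_dirichlet_series (N : ℕ) (hN : N.Prime) (t : ℝ) (ht : 0 < t) :
    Summable (fun d : ℕ =>
      ‖((Nat.totient (N*(d+1)) : ℂ) / ((((N*(d+1) : ℕ) : ℝ)^(2+t) : ℝ) : ℂ))‖) ∧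
    (∑' d : ℕ, ((Nat.totient (N*(d+1)) : ℂ) / ((((N*(d+1) : ℕ) : ℝ)^(2+t) : ℝ) : ℂ)))
      = riemannZeta (((1+t : ℝ) : ℂ)) / riemannZeta (((2+t : ℝ) : ℂ))
        - zetaOmit N (((1+t : ℝ) : ℂ)) / zetaOmit N (((2+t : ℝ) : ℂ)) := by
  set s : ℂ := ((2 + t : ℝ) : ℂ)
  have hs : 2 < s.re := by simpa [s] using ht
  have hs_sub : s - 1 = ((1 + t : ℝ) : ℂ) := by push_cast [s]; ring
  have hterm (d : ℕ) : term (fun n ↦ (n.totient : ℂ)) s (N * (d + 1)) =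
      (Nat.totient (N*(d+1)) : ℂ) / ((((N*(d+1) : ℕ) : ℝ)^(2+t) : ℝ) : ℂ) := by
    rw [term_of_ne_zero (by positivity [hN.pos]), ofReal_cpow (by positivity), ofReal_natCast]
  have hsum := LSeriesSummable_totient hs
  constructor
  · have := (hsum.comp_injective ((mul_right_injective₀ hN.ne_zero).comp
      (add_left_injective 1))).norm
    simpa only [Function.comp_def, hterm] using this
  · rw [← tsum_congr hterm, ← LSeries_sub_LSeries_one_mul hN hsum, LSeries_totient hs,
      LSeries_mul_totient _ hs, LSeries_one_eq_zetaOmit hN (s := s) (by linarith),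
      LSeries_one_eq_zetaOmit hN (s := s - 1) (by rw [sub_re, one_re]; linarith), hs_sub]

end
end

section
/- Let (q_n) be any sequence of positive integers with q_n → ∞ and let (y_n) be any sequence of real numbers in the interval [−1/2, 5/2]. Then the set ( ∪_{n≥1} { g(y_n) : g ∈ Red_{q_n} } ) ∩ [0,1], where g acts by the fractional linear transformation g(z) = (az+b)/(cz+d) for g = [[a,b],[c,d]], is dense in [0,1]. -/
/-
Every rational in `(0,1)` is a finite continued fraction `[k₁, …, kₘ]` (Euclid's algorithm).
Once `q_n > m`, the orbit `Red_{q_n}(y_n)` contains `[k₁, …, kₘ, L, 1, …, 1 + y_n]` for every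
`L ≥ 1`. Writing `w = [1, …, 1 + y_n] ≥ -1/2`, this point is `[k₁, …, kₘ₋₁, kₘ + 1/(L + w)]`,
which tends to `[k₁, …, kₘ]` as `L → ∞` since a continued fraction depends continuously on its
last entry. So the closure contains every rational of `(0,1)`, hence all of `[0,1]`.
-/

open MeasureTheory Filter Matrix

set_option synthInstance.maxHeartbeats 1000000
set_option maxHeartbeats 1000000

noncomputable section

/-- The fractional linear action of `g = [[a,b],[c,d]] ∈ GL(2,ℤ)` on `ℝ`. -/
def moeb (g : GL (Fin 2) ℤ) (x : ℝ) : ℝ :=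
  (((g : Matrix (Fin 2) (Fin 2) ℤ) 0 0 : ℝ) * x + ((g : Matrix (Fin 2) (Fin 2) ℤ) 0 1 : ℝ)) /
  (((g : Matrix (Fin 2) (Fin 2) ℤ) 1 0 : ℝ) * x + ((g : Matrix (Fin 2) (Fin 2) ℤ) 1 1 : ℝ))

open Set Topology

/-- `contFrac [k₁, …, kₘ] v = [k₁, …, kₘ₋₁, kₘ + v]`, and `contFrac [] v = v`. -/
def contFrac (ks : List ℤ) (v : ℝ) : ℝ := ks.foldr (fun (k : ℤ) (w : ℝ) => ((k : ℝ) + w)⁻¹) v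

@[simp]
lemma contFrac_nil (v : ℝ) : contFrac [] v = v := rfl

@[simp]
lemma contFrac_cons (k : ℤ) (ks : List ℤ) (v : ℝ) :
    contFrac (k :: ks) v = ((k : ℝ) + contFrac ks v)⁻¹ := rfl

lemma contFrac_append (ks ls : List ℤ) (v : ℝ) :
    contFrac (ks ++ ls) v = contFrac ks (contFrac ls v) := by
  simp only [contFrac, List.foldr_append]

lemma neg_half_le_contFrac {ks : List ℤ} (hks : ∀ k ∈ ks, 1 ≤ k) {v : ℝ} (hv : -(1/2) ≤ v) :
    -(1/2) ≤ contFrac ks v := by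
  induction ks with
  | nil => exact hv
  | cons k ks ih =>
    have hk : (1 : ℝ) ≤ k := by exact_mod_cast hks k List.mem_cons_self
    have hrest := ih fun a ha => hks a (List.mem_cons_of_mem k ha)
    have hden : 0 < (k : ℝ) + contFrac ks v := by linarith
    rw [contFrac_cons]
    linarith [inv_pos.2 hden]

lemma continuousOn_contFrac {ks : List ℤ} (hks : ∀ k ∈ ks, 1 ≤ k) :
    ContinuousOn (contFrac ks) (Ici (-(1/2))) := by
  induction ks with
  | nil => exact continuousOn_id
  | cons k ks ih =>
    have hks' : ∀ a ∈ ks, 1 ≤ a := fun a ha => hks a (List.mem_cons_of_mem k ha)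
    have hk : (1 : ℝ) ≤ k := by exact_mod_cast hks k List.mem_cons_self
    refine (continuousOn_const.add (ih hks')).inv₀ fun v hv => ne_of_gt ?_
    show 0 < (k : ℝ) + contFrac ks v
    linarith [neg_half_le_contFrac hks' (mem_Ici.1 hv)]

lemma exists_contFrac_eq_div (p q : ℕ) (hpq : p ≤ q) (hq : 0 < q) :
    ∃ ks : List ℤ, (∀ k ∈ ks, 1 ≤ k) ∧ contFrac ks 0 = p / q := by
  induction p using Nat.strong_induction_on generalizing q with
  | _ p ih =>
  rcases Nat.eq_zero_or_pos p with rfl | hp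
  · exact ⟨[], by simp, by simp⟩
  -- one step of the Euclidean algorithm: `q / p = ⌊q / p⌋ + (q % p) / p`
  obtain ⟨ks, hks, hval⟩ := ih (q % p) (Nat.mod_lt q hp) p (Nat.mod_lt q hp).le hp
  have hk : 1 ≤ q / p := Nat.div_pos hpq hp
  have hq_eq : (q : ℝ) = p * (q / p : ℕ) + (q % p : ℕ) := by
    exact_mod_cast (Nat.div_add_mod q p).symm
  refine ⟨((q / p : ℕ) : ℤ) :: ks, ?_, ?_⟩
  · simp only [List.mem_cons, forall_eq_or_imp]
    exact ⟨by exact_mod_cast hk, hks⟩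
  · rw [contFrac_cons, hval, hq_eq, Int.cast_natCast]
    have : (p : ℝ) ≠ 0 := by positivity
    field_simp

lemma exists_contFrac_eq_ratCast (r : ℚ) (h₀ : 0 ≤ r) (h₁ : r ≤ 1) :
    ∃ ks : List ℤ, (∀ k ∈ ks, 1 ≤ k) ∧ contFrac ks 0 = r := by
  have hnum : 0 ≤ r.num := Rat.num_nonneg.2 h₀
  obtain ⟨ks, hks, hval⟩ := exists_contFrac_eq_div r.num.toNat r.den
    (by have := Rat.num_le_denom_iff.2 h₁; omega) r.den_pos
  refine ⟨ks, hks, ?_⟩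
  rw [hval, Rat.cast_def, ← Int.toNat_of_nonneg hnum]
  push_cast
  rfl

def moebDenom (g : GL (Fin 2) ℤ) (x : ℝ) : ℝ :=
  ((g : Matrix (Fin 2) (Fin 2) ℤ) 1 0 : ℝ) * x + ((g : Matrix (Fin 2) (Fin 2) ℤ) 1 1 : ℝ)

lemma coe_gammaK_mul (k : ℤ) (g : GL (Fin 2) ℤ) :
    ((gammaK k * g : GL (Fin 2) ℤ) : Matrix (Fin 2) (Fin 2) ℤ) =
      let M := (g : Matrix (Fin 2) (Fin 2) ℤ)
      !![M 1 0, M 1 1; M 0 0 + k * M 1 0, M 0 1 + k * M 1 1] := by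
  rw [Units.val_mul, Matrix.eta_fin_two (g : Matrix (Fin 2) (Fin 2) ℤ)]
  simp [gammaK]

lemma moebDenom_gammaK_mul (k : ℤ) (g : GL (Fin 2) ℤ) (x : ℝ) (hg : moebDenom g x ≠ 0) :
    moebDenom (gammaK k * g) x = moebDenom g x * (k + moeb g x) := by
  simp only [moebDenom, moeb, coe_gammaK_mul, of_apply, cons_val', cons_val_zero, cons_val_fin_one,
    cons_val_one, Int.cast_add, Int.cast_mul] at hg ⊢
  field_simp
  ring

lemma moeb_gammaK_mul (k : ℤ) (g : GL (Fin 2) ℤ) (x : ℝ) (hg : moebDenom g x ≠ 0) :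
    moeb (gammaK k * g) x = (k + moeb g x)⁻¹ := by
  simp only [moebDenom, moeb, coe_gammaK_mul, of_apply, cons_val', cons_val_zero, cons_val_fin_one,
    cons_val_one, Int.cast_add, Int.cast_mul] at hg ⊢
  field_simp
  ring

lemma moeb_prod_gammaK {ks : List ℤ} (hks : ∀ k ∈ ks, 1 ≤ k) {v : ℝ} (hv : -(1/2) ≤ v) :
    0 < moebDenom (ks.map gammaK).prod v ∧ moeb (ks.map gammaK).prod v = contFrac ks v := by
  induction ks with
  | nil => simp [moebDenom, moeb]
  | cons k ks ih =>
    have hks' : ∀ a ∈ ks, 1 ≤ a := fun a ha => hks a (List.mem_cons_of_mem k ha)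
    have hk : (1 : ℝ) ≤ k := by exact_mod_cast hks k List.mem_cons_self
    obtain ⟨hpos, hval⟩ := ih hks'
    have hden : 0 < (k : ℝ) + contFrac ks v := by linarith [neg_half_le_contFrac hks' hv]
    rw [List.map_cons, List.prod_cons, moebDenom_gammaK_mul _ _ _ hpos.ne',
      moeb_gammaK_mul _ _ _ hpos.ne', hval, contFrac_cons]
    exact ⟨mul_pos hpos hden, rfl⟩

lemma prod_gammaK_mem_RedN (ks : List ℤ) (hks : ∀ k ∈ ks, 1 ≤ k) :
    (ks.map gammaK).prod ∈ RedN ks.length :=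
  ⟨fun i => ks[i], fun i => hks _ (List.getElem_mem i.2), by
    congr 1; apply List.ext_getElem <;> simp⟩

lemma tendsto_contFrac_append {ks ls : List ℤ} (hks : ∀ k ∈ ks, 1 ≤ k) (hls : ∀ k ∈ ls, 1 ≤ k)
    {v : ℝ} (hv : -(1/2) ≤ v) :
    Tendsto (fun L : ℕ => contFrac (ks ++ ((L : ℤ) + 1) :: ls) v) atTop (𝓝 (contFrac ks 0)) := by
  set w := contFrac ls v
  have hw : -(1/2) ≤ w := neg_half_le_contFrac hls hv
  have htail : Tendsto (fun L : ℕ => ((L : ℝ) + 1 + w)⁻¹) atTop (𝓝 0) :=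
    tendsto_inv_atTop_zero.comp <| tendsto_atTop_add_const_right _ w <|
      tendsto_atTop_add_const_right _ 1 tendsto_natCast_atTop_atTop
  have hcont : ContinuousAt (contFrac ks) 0 :=
    (continuousOn_contFrac hks).continuousAt (Ici_mem_nhds (by norm_num))
  refine (hcont.tendsto.comp htail).congr fun L => ?_
  simp [contFrac_append, w]

theorem red_orbits_dense_general (q : ℕ → ℕ)
    (hq : Tendsto q atTop atTop)
    (y : ℕ → ℝ) (hy : ∀ n, y n ∈ Set.Icc (-(1/2) : ℝ) (5/2)) :
    Set.Icc (0:ℝ) 1 ⊆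
      closure ((⋃ n : ℕ, {x : ℝ | ∃ g ∈ RedN (q n), moeb g (y n) = x}) ∩ Set.Icc 0 1) := by
  set S := (⋃ n : ℕ, {x : ℝ | ∃ g ∈ RedN (q n), moeb g (y n) = x}) ∩ Icc 0 1
  have hrat : ∀ r : ℚ, (r : ℝ) ∈ Ioo 0 1 → (r : ℝ) ∈ closure S := by
    rintro r ⟨h₀, h₁⟩
    obtain ⟨ks, hks, hval⟩ :=
      exists_contFrac_eq_ratCast r (by exact_mod_cast h₀.le) (by exact_mod_cast h₁.le)
    obtain ⟨n, hn⟩ := (hq.eventually_ge_atTop (ks.length + 1)).exists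
    set ls := List.replicate (q n - ks.length - 1) (1 : ℤ)
    have hls : ∀ k ∈ ls, 1 ≤ k := fun k hk => (List.eq_of_mem_replicate hk).ge
    have hlim := tendsto_contFrac_append hks hls (hy n).1
    rw [hval] at hlim
    refine mem_closure_of_tendsto hlim ?_
    filter_upwards [hlim.eventually (Icc_mem_nhds h₀ h₁)] with L hL
    have hdigits : ∀ k ∈ ks ++ ((L : ℤ) + 1) :: ls, 1 ≤ k := by
      simp only [List.mem_append, List.mem_cons]
      rintro k (hk | rfl | hk)
      exacts [hks k hk, by omega, hls k hk]
    refine ⟨mem_iUnion.2 ⟨n, _, ?_, (moeb_prod_gammaK hdigits (hy n).1).2⟩, hL⟩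
    convert prod_gammaK_mem_RedN _ hdigits using 2
    simp [ls]
    omega
  calc Icc 0 1 = closure (Ioo 0 1) := (closure_Ioo zero_ne_one).symm
    _ ⊆ closure S := closure_minimal
      ((Rat.denseRange_cast.open_subset_closure_inter isOpen_Ioo).trans <|
        closure_minimal (by rintro _ ⟨hx, r, rfl⟩; exact hrat r hx) isClosed_closure)
      isClosed_closure

/-- If `q_n → ∞` and `y_n ∈ [-1/2, 5/2]`, then `(∪_n Red_{q_n}(y_n)) ∩ [0,1]`
is dense in `[0,1]`. -/
theorem red_orbits_dense (q : ℕ → ℕ) (hq1 : ∀ n, 1 ≤ q n)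
    (hq : Tendsto q atTop atTop)
    (y : ℕ → ℝ) (hy : ∀ n, y n ∈ Set.Icc (-(1/2) : ℝ) (5/2)) :
    Set.Icc (0:ℝ) 1 ⊆
      closure ((⋃ n : ℕ, {x : ℝ | ∃ g ∈ RedN (q n), moeb g (y n) = x}) ∩ Set.Icc 0 1) :=
  red_orbits_dense_general q hq y hy

end
end
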